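/- arXiv:1502.06153 — 9 statements merged into one kernel-verified Lean document; each statement's English description precedes it below -/
import Mathlib

section
/- Let Γ be a discrete group acting continuously on a compact, zero-dimensional (totally disconnected) metrizable space X, and let β denote the induced action on C(X;ℤ), given by β_s(f)(x) = f(s⁻¹.x). Then the action on X is minimal (there is no closed subset Y with ∅ ≠ Y ⊊ X and s.Y = Y for every s ∈ Γ) if and only if for every nonzero f ∈ C(X;ℤ) with f ≥ 0 there exist finitely many elements t₁,…,t_n ∈ Γ such that β_{t₁}(f) + ⋯ + β_{t_n}(f) ≥ 1_X, where 1_X is the constant function 1 and the order on C(X;ℤ) is pointwise. -/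
open Pointwise

/-!
Minimality means that the translates `g • U` of every nonempty open set cover `X`. Applied to
the support of a nonzero `f ≥ 0`, compactness extracts finitely many translates, and the sum of
the corresponding translates of `f` is then `≥ 1`, `f` being integer valued. Conversely, a proper
closed invariant `Y` misses a nonempty clopen set `V`; all translates of the indicator of `V`
vanish on `Y`, so no finite sum of them is `≥ 1`.
-/

namespace MulAction

variable {Γ X : Type*} [Group Γ] [TopologicalSpace X] [MulAction Γ X]

theorem isMinimal_iff_not_exists_isClosed_smul_eq [ContinuousConstSMul Γ X] :
    IsMinimal Γ X ↔
      ¬ ∃ Y : Set X, IsClosed Y ∧ Y.Nonempty ∧ Y ≠ Set.univ ∧ ∀ s : Γ, s • Y = Y := by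
  rw [isMinimal_iff_isClosed_smul_invariant]
  refine ⟨fun h ⟨Y, hY, hne, hne_univ, hinv⟩ => ?_, fun h Y hY hinv => ?_⟩
  · exact hne_univ ((h Y hY fun s => (hinv s).le).resolve_left hne.ne_empty)
  · have hinv_eq : ∀ s : Γ, s • Y = Y := fun s =>
      (hinv s).antisymm (Set.subset_smul_set_iff.2 (hinv s⁻¹))
    by_contra! hY'
    exact h ⟨Y, hY, hY'.1, hY'.2, hinv_eq⟩

theorem IsMinimal.exists_one_le_sum_inv_smul [CompactSpace X] [ContinuousConstSMul Γ X]
    [IsMinimal Γ X] {f : C(X, ℤ)} (hf : f ≠ 0) (hpos : ∀ x, 0 ≤ f x) :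
    ∃ (n : ℕ) (t : Fin n → Γ), ∀ x, 1 ≤ ∑ j, f ((t j)⁻¹ • x) := by
  set U : Set X := {x | f x ≠ 0}
  have hU : IsOpen U := (isOpen_discrete {0}ᶜ).preimage f.continuous
  have hne : U.Nonempty := by
    by_contra! h
    exact hf (ContinuousMap.ext fun x => by_contra fun hx => h.subset hx)
  obtain ⟨I, hI⟩ := isCompact_univ.exists_finite_cover_smul Γ hU hne
  refine ⟨I.card, fun j => I.equivFin.symm j, fun x => ?_⟩
  obtain ⟨g, hg, hx⟩ : ∃ g ∈ I, x ∈ g • U := by simpa using hI (Set.mem_univ x)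
  have hgx : f (g⁻¹ • x) ≠ 0 := Set.mem_smul_set_iff_inv_smul_mem.1 hx
  calc (1 : ℤ) ≤ f (g⁻¹ • x) := by have := hpos (g⁻¹ • x); omega
    _ = f ((I.equivFin.symm (I.equivFin ⟨g, hg⟩) : Γ)⁻¹ • x) := by simp
    _ ≤ ∑ j, f ((I.equivFin.symm j : Γ)⁻¹ • x) :=
      Finset.single_le_sum (fun j _ => hpos _) (Finset.mem_univ _)

theorem isMinimal_of_forall_exists_one_le_sum_inv_smul [CompactSpace X] [T2Space X]
    [TotallyDisconnectedSpace X] [ContinuousConstSMul Γ X]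
    (hfill : ∀ f : C(X, ℤ), f ≠ 0 → (∀ x, 0 ≤ f x) →
      ∃ (n : ℕ) (t : Fin n → Γ), ∀ x, 1 ≤ ∑ j, f ((t j)⁻¹ • x)) :
    IsMinimal Γ X := by
  rw [isMinimal_iff_not_exists_isClosed_smul_eq]
  rintro ⟨Y, hY, ⟨y, hy⟩, hne_univ, hinv⟩
  obtain ⟨x, hx⟩ := (Set.ne_univ_iff_exists_notMem Y).1 hne_univ
  obtain ⟨V, hV, hxV, hVY⟩ := compact_exists_isClopen_in_isOpen hY.isOpen_compl hx
  let f : C(X, ℤ) := LocallyConstant.charFn ℤ hV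
  have hf : f ≠ 0 := fun h => by
    simpa [f, LocallyConstant.charFn_eq_zero, hxV] using DFunLike.congr_fun h x
  obtain ⟨n, t, ht⟩ := hfill f hf fun z => by
    by_cases hz : z ∈ V <;> simp [f, LocallyConstant.coe_charFn, hz]
  have hvanish : ∀ j, f ((t j)⁻¹ • y) = 0 := fun j => by
    have hmem : (t j)⁻¹ • y ∈ Y := by
      rw [← Set.mem_smul_set_iff_inv_smul_mem, hinv]; exact hy
    exact (LocallyConstant.charFn_eq_zero ℤ _ hV).2 fun h => hVY h hmem
  simpa [hvanish] using ht y

end MulAction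

theorem minimal_iff_K_theoretic_filling_general {Γ X : Type*} [Group Γ] [TopologicalSpace X]
    [CompactSpace X] [T2Space X] [TotallyDisconnectedSpace X]
    [MulAction Γ X]
    (hc : ∀ s : Γ, Continuous fun x : X => s • x)
    (β : Γ → C(X, ℤ) → C(X, ℤ)) (hβ : ∀ (s : Γ) (f : C(X, ℤ)) (x : X), β s f x = f (s⁻¹ • x)) :
    (¬ ∃ Y : Set X, IsClosed Y ∧ Y.Nonempty ∧ Y ≠ Set.univ ∧ ∀ s : Γ, s • Y = Y) ↔
      (∀ f : C(X, ℤ), f ≠ 0 → (∀ x : X, 0 ≤ f x) →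
        ∃ (n : ℕ) (t : Fin n → Γ), ∀ x : X, 1 ≤ (∑ j, β (t j) f) x) := by
  have : ContinuousConstSMul Γ X := ⟨hc⟩
  simp_rw [ContinuousMap.sum_apply, hβ, ← MulAction.isMinimal_iff_not_exists_isClosed_smul_eq]
  exact ⟨fun _ _ => MulAction.IsMinimal.exists_one_le_sum_inv_smul,
    MulAction.isMinimal_of_forall_exists_one_le_sum_inv_smul⟩

/-- For a continuous action of a discrete group `Γ` on a compact,
zero-dimensional metrizable space `X`, with induced action `β` on `C(X; ℤ)` given by
`β_s(f)(x) = f(s⁻¹ • x)`, the action on `X` is minimal if and only if for every nonzero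
nonnegative `f ∈ C(X; ℤ)` there are `t₁, …, t_n ∈ Γ` with `β_{t₁}(f) + ⋯ + β_{t_n}(f) ≥ 1`. -/
theorem minimal_iff_K_theoretic_filling {Γ X : Type*} [Group Γ] [TopologicalSpace X]
    [CompactSpace X] [T2Space X] [TotallyDisconnectedSpace X]
    [TopologicalSpace.MetrizableSpace X] [MulAction Γ X]
    (hc : ∀ s : Γ, Continuous fun x : X => s • x)
    (β : Γ → C(X, ℤ) → C(X, ℤ)) (hβ : ∀ (s : Γ) (f : C(X, ℤ)) (x : X), β s f x = f (s⁻¹ • x)) :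
    (¬ ∃ Y : Set X, IsClosed Y ∧ Y.Nonempty ∧ Y ≠ Set.univ ∧ ∀ s : Γ, s • Y = Y) ↔
      (∀ f : C(X, ℤ), f ≠ 0 → (∀ x : X, 0 ≤ f x) →
        ∃ (n : ℕ) (t : Fin n → Γ), ∀ x : X, 1 ≤ (∑ j, β (t j) f) x) :=
  minimal_iff_K_theoretic_filling_general hc β hβ
end

section
/- Let M be a commutative monoid with the Riesz refinement property and let a group Γ act on M by monoid automorphisms t ↦ (x ↦ t·x). Define a relation on M by: x ∼ y if and only if there exist n ∈ ℕ, elements u₁,…,u_n ∈ M and t₁,…,t_n ∈ Γ with x = u₁ + ⋯ + u_n and y = t₁·u₁ + ⋯ + t_n·u_n. Then ∼ is an equivalence relation on M. -/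
/-!
Reflexivity and symmetry need only the group action: invert the `tⱼ`. For transitivity, given
`x = ∑ uᵢ`, `y = ∑ tᵢ • uᵢ = ∑ vⱼ` and `z = ∑ sⱼ • vⱼ`, refine the two decompositions of `y` to
a matrix `cᵢⱼ` with row sums `tᵢ • uᵢ` and column sums `vⱼ`; then the pieces `tᵢ⁻¹ • cᵢⱼ`
witness `x ∼ z` via the group elements `sⱼ * tᵢ`.
-/

/-- Equidecomposability with respect to an action of a group `Γ` on a commutative
monoid `M` by monoid automorphisms: `x ∼ y` iff `x = u₁ + ⋯ + u_n` and
`y = t₁·u₁ + ⋯ + t_n·u_n` for some `uⱼ ∈ M` and `tⱼ ∈ Γ`. -/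
def MonoidEquidecomp {Γ M : Type*} [Group Γ] [AddCommMonoid M] [DistribMulAction Γ M]
    (x y : M) : Prop :=
  ∃ (n : ℕ) (u : Fin n → M) (t : Fin n → Γ), x = ∑ j, u j ∧ y = ∑ j, t j • u j

open Finset

def HasRieszRefinement (M : Type*) [AddCommMonoid M] : Prop :=
  ∀ x₁ x₂ y₁ y₂ : M, x₁ + x₂ = y₁ + y₂ →
    ∃ z₁₁ z₁₂ z₂₁ z₂₂ : M, x₁ = z₁₁ + z₁₂ ∧ x₂ = z₂₁ + z₂₂ ∧ y₁ = z₁₁ + z₂₁ ∧ y₂ = z₁₂ + z₂₂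

namespace HasRieszRefinement

variable {M : Type*} [AddCommMonoid M]

theorem exists_add_eq_sum (hM : HasRieszRefinement M) {n : ℕ} {x y : M}
    {b : Fin (n + 1) → M} (h : x + y = ∑ k, b k) :
    ∃ p q : Fin (n + 1) → M, x = ∑ k, p k ∧ y = ∑ k, q k ∧ ∀ k, b k = p k + q k := by
  induction n generalizing x y with
  | zero =>
    refine ⟨fun _ => x, fun _ => y, by simp, by simp, fun k => ?_⟩
    rw [Fin.eq_zero k, h, Fin.sum_univ_one]
  | succ n ih =>
    rw [Fin.sum_univ_succ] at h
    obtain ⟨z₁₁, z₁₂, z₂₁, z₂₂, hx, hy, hb₀, htail⟩ := hM _ _ _ _ h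
    obtain ⟨p, q, hp, hq, hpq⟩ := ih (b := fun k => b k.succ) htail.symm
    refine ⟨Fin.cons z₁₁ p, Fin.cons z₂₁ q, ?_, ?_, Fin.forall_fin_succ.2 ⟨?_, hpq⟩⟩
    · simpa [Fin.sum_univ_succ, ← hp] using hx
    · simpa [Fin.sum_univ_succ, ← hq] using hy
    · simpa using hb₀

theorem exists_matrix_of_sum_eq_sum (hM : HasRieszRefinement M) {m n : ℕ}
    {a : Fin (m + 1) → M} {b : Fin (n + 1) → M} (h : ∑ i, a i = ∑ j, b j) :
    ∃ c : Fin (m + 1) → Fin (n + 1) → M,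
      (∀ i, a i = ∑ j, c i j) ∧ ∀ j, b j = ∑ i, c i j := by
  induction m generalizing b with
  | zero =>
    refine ⟨fun _ => b, fun i => ?_, fun j => by simp⟩
    rw [Fin.eq_zero i, ← Fin.sum_univ_one a, h]
  | succ m ih =>
    rw [Fin.sum_univ_succ] at h
    obtain ⟨p, q, hp, hq, hpq⟩ := hM.exists_add_eq_sum h
    obtain ⟨c, hrows, hcols⟩ := ih (a := fun i => a i.succ) hq
    refine ⟨Fin.cons p c, Fin.forall_fin_succ.2 ⟨by simpa using hp, hrows⟩, fun j => ?_⟩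
    simp [Fin.sum_univ_succ, hpq j, hcols j]

end HasRieszRefinement

namespace MonoidEquidecomp

variable {Γ M : Type*} [Group Γ] [AddCommMonoid M] [DistribMulAction Γ M]

theorem of_fintype {ι : Type*} [Fintype ι] (u : ι → M) (t : ι → Γ) :
    MonoidEquidecomp (Γ := Γ) (∑ i, u i) (∑ i, t i • u i) := by
  let e := Fintype.equivFin ι
  exact ⟨Fintype.card ι, u ∘ e.symm, t ∘ e.symm,
    (e.symm.sum_comp u).symm, (e.symm.sum_comp fun i => t i • u i).symm⟩

/- Refinement needs nonempty index types (in a group, `x + -x = 0` does not refine against the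
empty sum), so witnesses are padded with a zero term. -/
theorem exists_fin_succ {x y : M} (h : MonoidEquidecomp (Γ := Γ) x y) :
    ∃ (n : ℕ) (u : Fin (n + 1) → M) (t : Fin (n + 1) → Γ),
      x = ∑ i, u i ∧ y = ∑ i, t i • u i := by
  obtain ⟨n, u, t, hx, hy⟩ := h
  exact ⟨n, Fin.cons 0 u, Fin.cons 1 t, by simpa [Fin.sum_univ_succ] using hx,
    by simpa [Fin.sum_univ_succ] using hy⟩

theorem refl (x : M) : MonoidEquidecomp (Γ := Γ) x x :=
  ⟨1, fun _ => x, fun _ => 1, by simp, by simp⟩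

theorem symm {x y : M} (h : MonoidEquidecomp (Γ := Γ) x y) : MonoidEquidecomp (Γ := Γ) y x := by
  obtain ⟨n, u, t, rfl, rfl⟩ := h
  simpa using of_fintype (fun i => t i • u i) fun i => (t i)⁻¹

theorem trans (hM : HasRieszRefinement M) {x y z : M} (hxy : MonoidEquidecomp (Γ := Γ) x y)
    (hyz : MonoidEquidecomp (Γ := Γ) y z) : MonoidEquidecomp (Γ := Γ) x z := by
  obtain ⟨m, u, t, rfl, hy⟩ := hxy.exists_fin_succ
  obtain ⟨n, v, s, hy', rfl⟩ := hyz.exists_fin_succ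
  obtain ⟨c, hrows, hcols⟩ := hM.exists_matrix_of_sum_eq_sum (hy.symm.trans hy')
  have hx : ∑ i, u i = ∑ ij : Fin (m + 1) × Fin (n + 1), (t ij.1)⁻¹ • c ij.1 ij.2 := by
    simp_rw [Fintype.sum_prod_type, ← smul_sum, ← hrows, inv_smul_smul]
  have hz : ∑ j, s j • v j =
      ∑ ij : Fin (m + 1) × Fin (n + 1), (s ij.2 * t ij.1) • (t ij.1)⁻¹ • c ij.1 ij.2 := by
    simp_rw [mul_smul, smul_inv_smul, Fintype.sum_prod_type_right, ← smul_sum, ← hcols]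
  rw [hx, hz]
  exact of_fintype _ _

end MonoidEquidecomp

/-- If `M` is a commutative monoid with the Riesz refinement property and a
group `Γ` acts on `M` by monoid automorphisms, then equidecomposability is an equivalence
relation on `M`. -/
theorem equidecomp_equivalence {Γ M : Type*} [Group Γ] [AddCommMonoid M]
    [DistribMulAction Γ M]
    (href : ∀ x₁ x₂ y₁ y₂ : M, x₁ + x₂ = y₁ + y₂ →
      ∃ z₁₁ z₁₂ z₂₁ z₂₂ : M, x₁ = z₁₁ + z₁₂ ∧ x₂ = z₂₁ + z₂₂ ∧
        y₁ = z₁₁ + z₂₁ ∧ y₂ = z₁₂ + z₂₂) :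
    Equivalence (MonoidEquidecomp (Γ := Γ) (M := M)) :=
  ⟨MonoidEquidecomp.refl, MonoidEquidecomp.symm, MonoidEquidecomp.trans href⟩
end

section
/- Let M be a commutative monoid equipped with the algebraic order (a ≤ b iff there is c ∈ M with a + c = b) and let a group Γ act on M by monoid automorphisms. Define x ∼ y if and only if there exist n ∈ ℕ, elements u₁,…,u_n ∈ M and t₁,…,t_n ∈ Γ with x = Σ u_j and y = Σ t_j·u_j. Then for x ∈ M and integers k > l > 0 the following are equivalent: (i) x is (Γ,k,l)-paradoxical, i.e. there exist x₁,…,x_n ∈ M and t₁,…,t_n ∈ Γ with k·x ≤ x₁ + ⋯ + x_n and t₁·x₁ + ⋯ + t_n·x_n ≤ l·x; (ii) there exists z ∈ M with k·x + z ∼ l·x. -/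
section

variable {Γ M : Type*} [Group Γ] [AddCommMonoid M] [DistribMulAction Γ M]

/-- The common summand is carried along as one more piece, moved by the identity. -/
theorem MonoidEquidecomp.add_left {x y : M} (h : MonoidEquidecomp (Γ := Γ) x y) (c : M) :
    MonoidEquidecomp (Γ := Γ) (c + x) (c + y) := by
  obtain ⟨n, u, t, rfl, rfl⟩ := h
  exact ⟨n + 1, Fin.cons c u, Fin.cons 1 t, by simp [Fin.sum_univ_succ],
    by simp [Fin.sum_univ_succ]⟩

end

theorem paradoxical_iff_equidecomp_general {Γ M : Type*} [Group Γ] [AddCommMonoid M]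
    [DistribMulAction Γ M] (x : M) (k l : ℕ) :
    (∃ (n : ℕ) (xs : Fin n → M) (t : Fin n → Γ),
      (∃ c : M, k • x + c = ∑ j, xs j) ∧ (∃ c : M, (∑ j, t j • xs j) + c = l • x)) ↔
    (∃ z : M, MonoidEquidecomp (Γ := Γ) (k • x + z) (l • x)) := by
  constructor
  · rintro ⟨n, xs, t, ⟨c₁, hc₁⟩, ⟨c₂, hc₂⟩⟩
    have h : MonoidEquidecomp (Γ := Γ) (c₂ + ∑ j, xs j) (c₂ + ∑ j, t j • xs j) :=
      MonoidEquidecomp.add_left ⟨n, xs, t, rfl, rfl⟩ c₂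
    rw [← hc₁, add_comm c₂, add_assoc, add_comm c₂ (∑ j, t j • xs j), hc₂] at h
    exact ⟨c₁ + c₂, h⟩
  · rintro ⟨z, n, u, t, hu, ht⟩
    exact ⟨n, u, t, ⟨z, hu⟩, ⟨0, by rw [add_zero, ← ht]⟩⟩

/-- For a commutative monoid `M` with the algebraic order (`a ≤ b` iff
`a + c = b` for some `c`) and a group `Γ` acting by monoid automorphisms, an element `x`
is `(Γ,k,l)`-paradoxical (for integers `k > l > 0`) iff `k·x + z ∼ l·x` for some `z`. -/
theorem paradoxical_iff_equidecomp {Γ M : Type*} [Group Γ] [AddCommMonoid M]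
    [DistribMulAction Γ M] (x : M) (k l : ℕ) (hlk : l < k) (hl : 0 < l) :
    (∃ (n : ℕ) (xs : Fin n → M) (t : Fin n → Γ),
      (∃ c : M, k • x + c = ∑ j, xs j) ∧ (∃ c : M, (∑ j, t j • xs j) + c = l • x)) ↔
    (∃ z : M, MonoidEquidecomp (Γ := Γ) (k • x + z) (l • x)) :=
  paradoxical_iff_equidecomp_general x k l
end

section
/- Let (G, G⁺) be a partially ordered abelian group and let a group Γ act on G by order automorphisms β_t. Suppose β: G → ℝ is a group homomorphism which is positive (β(g) ≥ 0 for all g ∈ G⁺), Γ-invariant (β ∘ β_t = β for all t ∈ Γ), and faithful (β(x) > 0 for every nonzero x ∈ G⁺). Then no nonzero x ∈ G⁺ is (Γ,k,l)-paradoxical for any integers k > l > 0; that is, there do not exist x₁,…,x_n ∈ G⁺ and t₁,…,t_n ∈ Γ with x₁ + ⋯ + x_n ≥ k·x and β_{t₁}(x₁) + ⋯ + β_{t_n}(x_n) ≤ l·x. -/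
/-! An invariant `φ` cannot tell `xⱼ` from `β_{tⱼ} xⱼ`, so it gives `Σ xⱼ` and `Σ β_{tⱼ} xⱼ` the same
value; positivity then turns `k • x ≤ Σ xⱼ` and `Σ β_{tⱼ} xⱼ ≤ l • x` into `k • φ x ≤ l • φ x`, which
faithfulness (`φ x > 0`) makes impossible for `k > l`. -/

theorem AddMonoidHom.map_sum_eq_of_forall_map_apply_eq {ι G M : Type*} [AddCommMonoid G]
    [AddCommMonoid M] (φ : G →+ M) (σ : ι → G → G) (hσ : ∀ i y, φ (σ i y) = φ y)
    (s : Finset ι) (xs : ι → G) : φ (∑ i ∈ s, σ i (xs i)) = φ (∑ i ∈ s, xs i) := by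
  simp only [map_sum, hσ]

theorem AddMonoidHom.le_of_nsmul_le_of_le_nsmul {G M : Type*} [AddCommMonoid G] [Preorder G]
    [AddCommMonoid M] [LinearOrder M] [IsOrderedCancelAddMonoid M] {φ : G →+ M} (hφ : Monotone φ)
    {x a b : G} (hx : 0 < φ x) {k l : ℕ} (hk : k • x ≤ a) (hl : b ≤ l • x) (hab : φ a ≤ φ b) :
    k ≤ l :=
  (nsmul_le_nsmul_iff_left hx).1 <| calc
    k • φ x = φ (k • x) := (map_nsmul φ k x).symm
    _ ≤ φ a := hφ hk
    _ ≤ φ b := hab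
    _ ≤ φ (l • x) := hφ hl
    _ = l • φ x := map_nsmul φ l x

theorem no_paradoxical_of_faithful_invariant_hom_general {Γ G : Type*} [Group Γ] [AddCommGroup G]
    [PartialOrder G] [CovariantClass G G (· + ·) (· ≤ ·)]
    (β : Γ →* Multiplicative (AddAut G))
    (φ : G →+ ℝ) (hφpos : ∀ g : G, 0 ≤ g → 0 ≤ φ g)
    (hφinv : ∀ (t : Γ) (y : G), φ (Multiplicative.toAdd (β t) y) = φ y)
    (hφfaithful : ∀ x : G, 0 ≤ x → x ≠ 0 → 0 < φ x) :
    ∀ x : G, 0 ≤ x → x ≠ 0 → ∀ k l : ℕ, l < k → 0 < l →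
      ¬ ∃ (n : ℕ) (xs : Fin n → G) (t : Fin n → Γ), (∀ j, 0 ≤ xs j) ∧
        k • x ≤ ∑ j, xs j ∧ (∑ j, Multiplicative.toAdd (β (t j)) (xs j)) ≤ l • x := by
  rintro x hx hx0 k l hlk - ⟨n, xs, t, -, hk, hl⟩
  have : IsOrderedAddMonoid G := { add_le_add_left := fun _ _ h c => add_le_add_left h c }
  have hφmono : Monotone φ := (monotone_iff_map_nonneg φ).2 hφpos
  have hsum := φ.map_sum_eq_of_forall_map_apply_eq (fun j y => Multiplicative.toAdd (β (t j)) y)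
    (fun j => hφinv (t j)) Finset.univ xs
  exact hlk.not_ge <| φ.le_of_nsmul_le_of_le_nsmul hφmono (hφfaithful x hx hx0) hk hl hsum.ge

/-- Let `(G, G⁺)` be a partially ordered abelian group with a group `Γ`
acting by order automorphisms `β_t`, and let `φ : G → ℝ` be a positive, `Γ`-invariant,
faithful group homomorphism. Then no nonzero `x ∈ G⁺` is `(Γ,k,l)`-paradoxical for any
integers `k > l > 0`. -/
theorem no_paradoxical_of_faithful_invariant_hom {Γ G : Type*} [Group Γ] [AddCommGroup G]
    [PartialOrder G] [CovariantClass G G (· + ·) (· ≤ ·)]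
    (β : Γ →* Multiplicative (AddAut G)) (hβpos : ∀ (t : Γ) (y : G), 0 ≤ y ↔ 0 ≤ Multiplicative.toAdd (β t) y)
    (φ : G →+ ℝ) (hφpos : ∀ g : G, 0 ≤ g → 0 ≤ φ g)
    (hφinv : ∀ (t : Γ) (y : G), φ (Multiplicative.toAdd (β t) y) = φ y)
    (hφfaithful : ∀ x : G, 0 ≤ x → x ≠ 0 → 0 < φ x) :
    ∀ x : G, 0 ≤ x → x ≠ 0 → ∀ k l : ℕ, l < k → 0 < l →
      ¬ ∃ (n : ℕ) (xs : Fin n → G) (t : Fin n → Γ), (∀ j, 0 ≤ xs j) ∧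
        k • x ≤ ∑ j, xs j ∧ (∑ j, Multiplicative.toAdd (β (t j)) (xs j)) ≤ l • x :=
  no_paradoxical_of_faithful_invariant_hom_general β φ hφpos hφinv hφfaithful
end

section
/- Let (W, +, ≤) be a preordered commutative monoid in which addition is compatible with the preorder (a ≤ b implies a + c ≤ b + c), and suppose W is almost unperforated: whenever n·x ≤ m·y for elements x, y ∈ W and positive integers n > m, then x ≤ y. If θ ∈ W satisfies (k+1)·θ ≤ k·θ for some positive integer k, then 2·θ ≤ θ, i.e. θ is properly infinite. -/
theorem nsmul_le_of_succ_nsmul_le {W : Type*} [AddCommMonoid W] [Preorder W]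
    (hadd : ∀ a b c : W, a ≤ b → a + c ≤ b + c) {θ : W} {k : ℕ}
    (h : (k + 1) • θ ≤ k • θ) {n : ℕ} (hn : k ≤ n) : n • θ ≤ k • θ := by
  induction n, hn using Nat.le_induction with
  | base => exact le_rfl
  | succ n _ ih =>
    calc (n + 1) • θ = n • θ + θ := succ_nsmul θ n
      _ ≤ k • θ + θ := hadd _ _ _ ih
      _ = (k + 1) • θ := (succ_nsmul θ k).symm
      _ ≤ k • θ := h

/-- In a preordered commutative monoid `W` in which addition is compatible
with the preorder and which is almost unperforated, any element `θ` satisfying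
`(k+1)·θ ≤ k·θ` for some positive integer `k` is properly infinite: `2·θ ≤ θ`. -/
theorem properlyInfinite_of_almostUnperforated {W : Type*} [AddCommMonoid W] [Preorder W]
    (hadd : ∀ a b c : W, a ≤ b → a + c ≤ b + c)
    (hunperf : ∀ (x y : W) (n m : ℕ), m < n → 0 < m → n • x ≤ m • y → x ≤ y)
    (θ : W) (k : ℕ) (hk : 0 < k) (h : (k + 1) • θ ≤ k • θ) :
    2 • θ ≤ θ := by
  have h2 : (k + 1) • (2 • θ) ≤ k • θ := by
    rw [smul_smul]
    exact nsmul_le_of_succ_nsmul_le hadd h (by omega)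
  exact hunperf (2 • θ) θ (k + 1) k k.lt_succ_self hk h2
end

section
/- Let (W, +, ≤) be a preordered commutative monoid in which addition is compatible with the preorder, let a group Γ act on W by order-preserving monoid automorphisms (written t·x), let u ∈ W and let n be a positive integer. Assume: (a) transitivity: for all nonzero x, y ∈ W there exist a nonzero z ∈ W and t ∈ Γ with z ≤ x and t·z ≤ y; and (b) n-minimality: for every nonzero x ∈ W there exist t₁,…,t_n ∈ Γ with t₁·x + ⋯ + t_n·x ≥ u. Then the action is n-filling: for all nonzero x₁,…,x_n ∈ W there exist t₁,…,t_n ∈ Γ with t₁·x₁ + ⋯ + t_n·x_n ≥ u. -/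
/-!
Transitivity lets one shrink any finite family of nonzero elements `x₁, …, xₙ` to a single
nonzero `z` with translates `sⱼ • z ≤ xⱼ`: refine a common minorant one element at a time.
Applying `n`-minimality to `z` gives `u ≤ ∑ tⱼ • z ≤ ∑ (tⱼ sⱼ⁻¹) • xⱼ`.
-/

theorem exists_ne_zero_le_and_forall_smul_le {Γ W ι : Type*} [SMul Γ W] [Zero W] [Preorder W]
    (s : Finset ι)
    (hmono : ∀ (t : Γ) (a b : W), a ≤ b → t • a ≤ t • b)
    (htrans : ∀ x y : W, x ≠ 0 → y ≠ 0 → ∃ z : W, z ≠ 0 ∧ ∃ t : Γ, z ≤ x ∧ t • z ≤ y)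
    {z₀ : W} (hz₀ : z₀ ≠ 0) {xs : ι → W} (hxs : ∀ j ∈ s, xs j ≠ 0) :
    ∃ z : W, z ≠ 0 ∧ z ≤ z₀ ∧ ∀ j ∈ s, ∃ t : Γ, t • z ≤ xs j := by
  classical
  induction s using Finset.induction_on with
  | empty => exact ⟨z₀, hz₀, le_rfl, by simp⟩
  | insert i s _ ih =>
    obtain ⟨z, hz, hzz₀, hs⟩ := ih fun j hj => hxs j (Finset.mem_insert_of_mem hj)
    obtain ⟨z', hz', ti, hz'z, hti⟩ := htrans z (xs i) hz (hxs i (Finset.mem_insert_self i s))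
    refine ⟨z', hz', hz'z.trans hzz₀, fun j hj => ?_⟩
    rcases Finset.mem_insert.mp hj with rfl | hj
    · exact ⟨ti, hti⟩
    · obtain ⟨t, ht⟩ := hs j hj
      exact ⟨t, (hmono t _ _ hz'z).trans ht⟩

theorem nFilling_of_nMinimal_general {Γ W : Type*} [Group Γ] [AddCommMonoid W] [Preorder W]
    [DistribMulAction Γ W]
    (hadd : ∀ a b c : W, a ≤ b → a + c ≤ b + c)
    (hmono : ∀ (t : Γ) (a b : W), a ≤ b ↔ t • a ≤ t • b)
    (u : W) (n : ℕ)
    (htrans : ∀ x y : W, x ≠ 0 → y ≠ 0 → ∃ z : W, z ≠ 0 ∧ ∃ t : Γ, z ≤ x ∧ t • z ≤ y)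
    (hmin : ∀ x : W, x ≠ 0 → ∃ t : Fin n → Γ, u ≤ ∑ j, t j • x) :
    ∀ xs : Fin n → W, (∀ j, xs j ≠ 0) → ∃ t : Fin n → Γ, u ≤ ∑ j, t j • xs j := by
  intro xs hxs
  by_cases hW : ∃ x : W, x ≠ 0
  · obtain ⟨z₀, hz₀⟩ := hW
    obtain ⟨z, hz, -, hs⟩ := exists_ne_zero_le_and_forall_smul_le Finset.univ
      (fun t a b => (hmono t a b).mp) htrans hz₀ fun j _ => hxs j
    choose s hs using fun j => hs j (Finset.mem_univ j)
    obtain ⟨t, ht⟩ := hmin z hz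
    have : AddLeftMono W := ⟨fun c a b h => by simpa only [add_comm c] using hadd a b c h⟩
    refine ⟨fun j => t j * (s j)⁻¹, ht.trans (Finset.sum_le_sum fun j _ => ?_)⟩
    simpa only [smul_smul, inv_mul_cancel_right] using (hmono (t j * (s j)⁻¹) _ _).mp (hs j)
  · simp only [ne_eq, not_exists, not_not] at hW
    exact ⟨1, (hW u).trans_le (hW _).ge⟩

/-- Let `W` be a preordered commutative monoid with addition compatible with
the preorder, with a group `Γ` acting by order-preserving monoid automorphisms, `u ∈ W`
and `n` a positive integer. If the action is (topologically) transitive and `n`-minimal,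
then it is `n`-filling. -/
theorem nFilling_of_nMinimal {Γ W : Type*} [Group Γ] [AddCommMonoid W] [Preorder W]
    [DistribMulAction Γ W]
    (hadd : ∀ a b c : W, a ≤ b → a + c ≤ b + c)
    (hmono : ∀ (t : Γ) (a b : W), a ≤ b ↔ t • a ≤ t • b)
    (u : W) (n : ℕ) (hn : 0 < n)
    (htrans : ∀ x y : W, x ≠ 0 → y ≠ 0 → ∃ z : W, z ≠ 0 ∧ ∃ t : Γ, z ≤ x ∧ t • z ≤ y)
    (hmin : ∀ x : W, x ≠ 0 → ∃ t : Fin n → Γ, u ≤ ∑ j, t j • x) :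
    ∀ xs : Fin n → W, (∀ j, xs j ≠ 0) → ∃ t : Fin n → Γ, u ≤ ∑ j, t j • xs j :=
  nFilling_of_nMinimal_general hadd hmono u n htrans hmin
end

section
/- Let A be a unital C*-algebra, Γ a discrete group, and α: Γ → Aut(A) an action by *-automorphisms. Then A has no α-invariant closed two-sided ideal I with (0) ≠ I ⊊ A if and only if for every nonzero positive element a ∈ A there exist m ∈ ℕ, group elements t₁,…,t_m ∈ Γ and elements z₁,…,z_m ∈ A such that z₁ α_{t₁}(a) z₁* + ⋯ + z_m α_{t_m}(a) z_m* ≥ 1, where 1 is the unit of A and ≥ is the order on self-adjoint elements given by the positive cone of A. -/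
/-!
If `a ≥ 0` is nonzero, the closure of the two-sided ideal generated by its orbit is closed,
invariant and nonzero, hence all of `A`; since the invertible elements form an open set, the ideal
itself already contains `1`, say `1 = ∑ xⱼ α_{tⱼ}(a) yⱼ`. Then
`2 = 1 + 1* ≤ ∑ (xⱼ α_{tⱼ}(a) xⱼ* + yⱼ* α_{tⱼ}(a) yⱼ)`, the difference being the sum of the
positive elements `(xⱼ - yⱼ*) α_{tⱼ}(a) (xⱼ - yⱼ*)*`. Conversely, a sum `∑ zⱼ α_{tⱼ}(a) zⱼ* ≥ 1`
is invertible and lies in every invariant ideal containing `a`, and every nonzero ideal contains a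
nonzero positive element `x x*`.
-/

theorem Set.image_eq_of_forall_mapsTo {Γ X F : Type*} [Group Γ] [EquivLike F X X] {α : Γ → F}
    (hα : ∀ (s t : Γ) (x : X), α (s * t) x = α s (α t x)) {S : Set X}
    (hS : ∀ s, MapsTo (α s) S S) (s : Γ) : α s '' S = S := by
  refine (hS s).image_subset.antisymm fun x hx => ⟨α s⁻¹ x, hS s⁻¹ hx, ?_⟩
  have hone : α 1 x = x := EquivLike.injective (α 1) (by rw [← hα, one_mul])
  rw [← hα, mul_inv_cancel, hone]

namespace TwoSidedIdeal

theorem exists_eq_sum_of_mem_span_range {R ι : Type*} [Ring R] {f : ι → R} {z : R}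
    (hz : z ∈ span (Set.range f)) :
    ∃ (m : ℕ) (t : Fin m → ι) (x y : Fin m → R), z = ∑ j, x j * f (t j) * y j := by
  induction hz using span_induction with
  | mem _ h =>
    obtain ⟨i, rfl⟩ := h
    exact ⟨1, fun _ => i, 1, 1, by simp⟩
  | zero => exact ⟨0, Fin.elim0, Fin.elim0, Fin.elim0, by simp⟩
  | add _ _ _ _ hb hc =>
    obtain ⟨m, t, x, y, rfl⟩ := hb
    obtain ⟨n, t', x', y', rfl⟩ := hc
    exact ⟨m + n, Fin.append t t', Fin.append x x', Fin.append y y', by simp [Fin.sum_univ_add]⟩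
  | neg _ _ hb =>
    obtain ⟨m, t, x, y, rfl⟩ := hb
    exact ⟨m, t, -x, y, by simp⟩
  | left_absorb r _ _ hb =>
    obtain ⟨m, t, x, y, rfl⟩ := hb
    exact ⟨m, t, fun j => r * x j, y, by simp [Finset.mul_sum, mul_assoc]⟩
  | right_absorb r _ _ hb =>
    obtain ⟨m, t, x, y, rfl⟩ := hb
    exact ⟨m, t, x, fun j => y j * r, by simp [Finset.sum_mul, mul_assoc]⟩

theorem mapsTo_span_range_orbit {Γ R F : Type*} [Group Γ] [Ring R] [EquivLike F R R]
    [RingEquivClass F R R] {α : Γ → F} (hα : ∀ (s t : Γ) (x : R), α (s * t) x = α s (α t x))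
    (a : R) (s : Γ) :
    Set.MapsTo (α s) (span (Set.range fun t => α t a)) (span (Set.range fun t => α t a)) := by
  intro x hx
  refine mem_comap (f := α s) |>.mp (span_le.mpr ?_ hx)
  rintro _ ⟨t, rfl⟩
  rw [SetLike.mem_coe, mem_comap, ← hα]
  exact subset_span ⟨s * t, rfl⟩

theorem exists_mem_ne_zero_of_ne_bot {R : Type*} [NonUnitalNonAssocRing R] {I : TwoSidedIdeal R}
    (hI : I ≠ ⊥) : ∃ x ∈ I, x ≠ 0 := by
  by_contra! h
  exact hI (le_bot_iff.mp fun y hy => (mem_bot R).mpr (h y hy))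

theorem eq_top_of_isUnit_mem {R : Type*} [Ring R] (I : TwoSidedIdeal R) {u : R}
    (hu : IsUnit u) (huI : u ∈ I) : I = ⊤ := by
  obtain ⟨v, rfl⟩ := hu
  exact I.eq_top (v.inv_mul ▸ I.mul_mem_left _ _ huI)

section TopologicalClosure

variable {R : Type*} [Ring R] [TopologicalSpace R] [IsTopologicalRing R]

def topologicalClosure (I : TwoSidedIdeal R) : TwoSidedIdeal R :=
  .mk' (closure (I : Set R)) (subset_closure I.zero_mem)
    (fun hx hy => map_mem_closure₂ continuous_add hx hy fun _ ha _ hb => I.add_mem ha hb)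
    (fun hx => map_mem_closure continuous_neg hx fun _ ha => I.neg_mem ha)
    (fun {x _} hy => map_mem_closure (continuous_const_mul x) hy
      fun _ ha => I.mul_mem_left _ _ ha)
    (fun {_ y} hx => map_mem_closure (f := (· * y)) (continuous_mul_const y) hx
      fun _ ha => I.mul_mem_right _ _ ha)

@[simp]
theorem coe_topologicalClosure (I : TwoSidedIdeal R) :
    (I.topologicalClosure : Set R) = closure I := by
  rw [topologicalClosure, coe_mk']

theorem isClosed_topologicalClosure (I : TwoSidedIdeal R) :
    IsClosed (I.topologicalClosure : Set R) := by
  rw [coe_topologicalClosure]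
  exact isClosed_closure

end TopologicalClosure

theorem topologicalClosure_ne_top {R : Type*} [NormedRing R] [CompleteSpace R]
    {I : TwoSidedIdeal R} (hI : I ≠ ⊤) : I.topologicalClosure ≠ ⊤ := by
  intro h
  have h1 : (1 : R) ∈ closure (I : Set R) := by
    rw [← coe_topologicalClosure, h]; trivial
  obtain ⟨u, hu, huI⟩ := mem_closure_iff.mp h1 _ Units.isOpen isUnit_one
  exact hI (I.eq_top_of_isUnit_mem hu huI)

end TwoSidedIdeal

section StarOrderedRing

variable {R : Type*} [Ring R] [PartialOrder R] [StarRing R] [StarOrderedRing R]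

theorem mul_mul_add_star_le_add {p : R} (hp : 0 ≤ p) (x y : R) :
    x * p * y + star y * p * star x ≤ x * p * star x + star y * p * y := by
  have h := star_right_conjugate_nonneg hp (x - star y)
  rw [star_sub, star_star] at h
  refine sub_nonneg.mp (h.trans_eq ?_)
  noncomm_ring

theorem exists_one_le_sum_conj_of_span_range_eq_top {ι : Type*} {f : ι → R} (hf : ∀ i, 0 ≤ f i)
    (h : TwoSidedIdeal.span (Set.range f) = ⊤) :
    ∃ (m : ℕ) (t : Fin m → ι) (z : Fin m → R), 1 ≤ ∑ j, z j * f (t j) * star (z j) := by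
  have hmem : (1 : R) ∈ TwoSidedIdeal.span (Set.range f) := h ▸ TwoSidedIdeal.mem_top R
  obtain ⟨m, t, x, y, h1⟩ := TwoSidedIdeal.exists_eq_sum_of_mem_span_range hmem
  have h1' : ∑ j, star (y j) * f (t j) * star (x j) = 1 := by
    simpa [star_sum, mul_assoc, fun i => (IsSelfAdjoint.of_nonneg (hf i)).star_eq]
      using (congrArg star h1).symm
  refine ⟨m + m, Fin.append t t, Fin.append x (star y), ?_⟩
  calc (1 : R) ≤ 1 + 1 := le_add_of_nonneg_left zero_le_one
    _ = ∑ j, (x j * f (t j) * y j + star (y j) * f (t j) * star (x j)) := by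
        rw [Finset.sum_add_distrib, ← h1, h1']
    _ ≤ ∑ j, (x j * f (t j) * star (x j) + star (y j) * f (t j) * y j) :=
        Finset.sum_le_sum fun j _ => mul_mul_add_star_le_add (hf _) _ _
    _ = _ := by
        rw [Fin.sum_univ_add, Finset.sum_add_distrib]
        simp only [Fin.append_left, Fin.append_right, Pi.star_apply, star_star]

end StarOrderedRing

open TwoSidedIdeal in
/-- Let `A` be a unital C*-algebra with a discrete group `Γ` acting by
*-automorphisms `α`. Then `A` has no nontrivial `α`-invariant closed two-sided ideal if
and only if for every nonzero positive `a ∈ A` there are `t₁,…,t_m ∈ Γ` and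
`z₁,…,z_m ∈ A` with `∑ zⱼ α_{tⱼ}(a) zⱼ* ≥ 1`. -/
theorem gammaSimple_iff_filling {Γ A : Type*} [Group Γ] [CStarAlgebra A]
    [PartialOrder A] [StarOrderedRing A]
    (α : Γ → A ≃⋆ₐ[ℂ] A) (hα : ∀ (s t : Γ) (x : A), α (s * t) x = α s (α t x)) :
    (¬ ∃ I : TwoSidedIdeal A, IsClosed (I : Set A) ∧ I ≠ ⊥ ∧ I ≠ ⊤ ∧
        ∀ s : Γ, (α s) '' (I : Set A) = I) ↔
      (∀ a : A, 0 ≤ a → a ≠ 0 →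
        ∃ (m : ℕ) (t : Fin m → Γ) (z : Fin m → A),
          1 ≤ ∑ j, z j * α (t j) a * star (z j)) := by
  constructor
  · intro hsimple a ha ha0
    refine exists_one_le_sum_conj_of_span_range_eq_top (fun t => map_nonneg (α t) ha) ?_
    by_contra hne
    set I := (span (Set.range fun t => α t a)).topologicalClosure
    have hI0 : α 1 a ∈ I := by
      rw [← SetLike.mem_coe, coe_topologicalClosure]
      exact subset_closure (subset_span ⟨1, rfl⟩)
    refine hsimple
      ⟨I, isClosed_topologicalClosure _, fun h => ?_, topologicalClosure_ne_top hne, ?_⟩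
    · rw [h, mem_bot, EmbeddingLike.map_eq_zero_iff] at hI0
      exact ha0 hI0
    · refine Set.image_eq_of_forall_mapsTo hα fun s => ?_
      rw [coe_topologicalClosure]
      exact (mapsTo_span_range_orbit hα a s).closure
        (NonUnitalStarAlgHom.isometry (α s) (α s).injective).continuous
  · rintro hfill ⟨I, -, hbot, htop, hinv⟩
    obtain ⟨x, hxI, hx0⟩ := exists_mem_ne_zero_of_ne_bot hbot
    obtain ⟨m, t, z, hle⟩ := hfill (x * star x) (mul_star_self_nonneg x)
      ((CStarRing.mul_star_self_eq_zero_iff x).not.mpr hx0)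
    refine htop (I.eq_top_of_isUnit_mem (CStarAlgebra.isUnit_of_le 1 hle) ?_)
    refine sum_mem fun j _ => I.mul_mem_right _ _ (I.mul_mem_left _ _ ?_)
    rw [← SetLike.mem_coe, ← hinv (t j)]
    exact Set.mem_image_of_mem _ (I.mul_mem_right _ _ hxI)
end

section
/- Let A be a unital C*-algebra, Γ a discrete group, and α: Γ → Aut(A) an action by *-automorphisms with no α-invariant closed two-sided ideal I satisfying (0) ≠ I ⊊ A. Then for all nonzero positive elements a, b ∈ A there exist t ∈ Γ, w ∈ A and a real number λ > 0 such that w* a w ≠ 0 and α_t(w* a w) ≤ λ·b. -/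
/-!
Let `c = √b`. The elements `z` with `z * A * c = 0` form a proper closed two-sided ideal, and
the largest `α`-invariant ideal inside it is still closed and proper, hence zero. As `a ≠ 0`, it
does not lie in that invariant ideal, which produces `t` and `y` with `α t a * y * c ≠ 0`. For
`w = α t⁻¹ (y * c)` we get `α t (w⋆ a w) = c⋆ d c` with `d = y⋆ (α t a) y`, which is bounded
by `‖d‖ • c⋆ c = ‖d‖ • b` and is nonzero because `√(α t a) * y * c ≠ 0`.
-/

section GroupAction

variable {Γ R F : Type*} [Group Γ] [EquivLike F R R] {α : Γ → F}

theorem apply_one_of_map_mul (hα : ∀ (s t : Γ) (x : R), α (s * t) x = α s (α t x)) (x : R) :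
    α 1 x = x :=
  EquivLike.injective (α 1) (by rw [← hα, one_mul])

theorem apply_apply_inv_of_map_mul (hα : ∀ (s t : Γ) (x : R), α (s * t) x = α s (α t x))
    (t : Γ) (x : R) : α t (α t⁻¹ x) = x := by
  rw [← hα, mul_inv_cancel, apply_one_of_map_mul hα]

end GroupAction

namespace TwoSidedIdeal

section LeftAnnihilator

variable {R : Type*} [Ring R]

def leftAnnihilator (c : R) : TwoSidedIdeal R :=
  .mk' {z | ∀ v, z * v * c = 0} (by simp)
    (fun hx hy v => by simp only [add_mul, hx v, hy v, add_zero])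
    (fun hx v => by simp only [neg_mul, hx v, neg_zero])
    (fun {x y} hy v => by simp only [mul_assoc, hy v, mul_zero])
    (fun {x y} hx v => by simp only [mul_assoc x y, hx (y * v)])

theorem mem_leftAnnihilator {c z : R} : z ∈ leftAnnihilator c ↔ ∀ v, z * v * c = 0 :=
  mem_mk' ..

theorem leftAnnihilator_ne_top {c : R} (hc : c ≠ 0) : leftAnnihilator c ≠ ⊤ := by
  intro h
  exact hc (by simpa using mem_leftAnnihilator.1 ((one_mem_iff _).2 h) 1)

theorem isClosed_leftAnnihilator [TopologicalSpace R] [ContinuousMul R] [T1Space R] (c : R) :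
    IsClosed (leftAnnihilator c : Set R) := by
  have : (leftAnnihilator c : Set R) = ⋂ v, (fun z => z * v * c) ⁻¹' {0} := by
    ext z; simp [mem_leftAnnihilator]
  rw [this]
  exact isClosed_iInter fun v => isClosed_singleton.preimage (by fun_prop)

end LeftAnnihilator

section InvariantCore

variable {Γ R F : Type*} [Ring R] [EquivLike F R R] [RingEquivClass F R R]

def invariantCore (α : Γ → F) (I : TwoSidedIdeal R) : TwoSidedIdeal R :=
  ⨅ s, I.comap (α s)

variable {α : Γ → F} {I : TwoSidedIdeal R}

theorem mem_invariantCore {x : R} : x ∈ I.invariantCore α ↔ ∀ s, α s x ∈ I := by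
  simp only [invariantCore, mem_iInf, mem_comap]

theorem invariantCore_ne_top [Nonempty Γ] (hI : I ≠ ⊤) : I.invariantCore α ≠ ⊤ := by
  intro h
  have h1 : (1 : R) ∈ I.invariantCore α := (one_mem_iff _).2 h
  exact hI ((one_mem_iff I).1 (by simpa using mem_invariantCore.1 h1 (Classical.arbitrary Γ)))

theorem isClosed_invariantCore [TopologicalSpace R] (hα : ∀ s, Continuous (α s))
    (hI : IsClosed (I : Set R)) : IsClosed (I.invariantCore α : Set R) := by
  have : (I.invariantCore α : Set R) = ⋂ s, α s ⁻¹' I := by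
    ext x; simp [mem_invariantCore]
  rw [this]
  exact isClosed_iInter fun s => hI.preimage (hα s)

theorem image_invariantCore [Group Γ] (hα : ∀ (s t : Γ) (x : R), α (s * t) x = α s (α t x))
    (t : Γ) :
    α t '' (I.invariantCore α : Set R) = I.invariantCore α := by
  have hmaps : ∀ t, ∀ x ∈ I.invariantCore α, α t x ∈ I.invariantCore α := fun t x hx =>
    mem_invariantCore.2 fun s => hα s t x ▸ mem_invariantCore.1 hx (s * t)
  refine subset_antisymm (Set.image_subset_iff.2 (hmaps t)) fun x hx => ?_
  exact ⟨α t⁻¹ x, hmaps t⁻¹ x hx, apply_apply_inv_of_map_mul hα t x⟩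

end InvariantCore

end TwoSidedIdeal

theorem exists_apply_mul_mul_ne_zero {Γ R F : Type*} [Group Γ] [Ring R] [TopologicalSpace R]
    [ContinuousMul R] [T1Space R] [EquivLike F R R] [RingEquivClass F R R] {α : Γ → F}
    (hα : ∀ (s t : Γ) (x : R), α (s * t) x = α s (α t x)) (hcont : ∀ s, Continuous (α s))
    (hsimple : ¬ ∃ I : TwoSidedIdeal R, IsClosed (I : Set R) ∧ I ≠ ⊥ ∧ I ≠ ⊤ ∧
        ∀ s : Γ, (α s) '' (I : Set R) = I)
    {a c : R} (ha : a ≠ 0) (hc : c ≠ 0) : ∃ t y, α t a * y * c ≠ 0 := by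
  by_contra! h
  set I := (TwoSidedIdeal.leftAnnihilator c).invariantCore α
  refine hsimple ⟨I, ?_, ?_, ?_, TwoSidedIdeal.image_invariantCore hα⟩
  · exact TwoSidedIdeal.isClosed_invariantCore hcont (TwoSidedIdeal.isClosed_leftAnnihilator c)
  · intro hI
    have haI : a ∈ I := TwoSidedIdeal.mem_invariantCore.2 fun s =>
      TwoSidedIdeal.mem_leftAnnihilator.2 (h s)
    exact ha (by rwa [hI, TwoSidedIdeal.mem_bot] at haI)
  · exact TwoSidedIdeal.invariantCore_ne_top (TwoSidedIdeal.leftAnnihilator_ne_top hc)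

theorem star_mul_mul_ne_zero_of_mul_ne_zero {A : Type*} [NonUnitalCStarAlgebra A]
    [PartialOrder A] [StarOrderedRing A] {a x : A} (ha : 0 ≤ a) (hax : a * x ≠ 0) :
    star x * a * x ≠ 0 := by
  have hsqrt : star x * a * x = star (CFC.sqrt a * x) * (CFC.sqrt a * x) := by
    rw [star_mul, (CFC.sqrt_nonneg a).star_eq]
    conv_lhs => rw [← CFC.sqrt_mul_sqrt_self a ha]
    simp only [mul_assoc]
  rw [hsqrt, Ne, CStarRing.star_mul_self_eq_zero_iff]
  exact fun h => hax (by rw [← CFC.sqrt_mul_sqrt_self a, mul_assoc, h, mul_zero])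

/-- Let `A` be a unital C*-algebra with a discrete group `Γ` acting by
*-automorphisms `α`, admitting no nontrivial `α`-invariant closed two-sided ideal. Then
for all nonzero positive `a, b ∈ A` there exist `t ∈ Γ`, `w ∈ A` and `λ > 0` with
`w* a w ≠ 0` and `α_t(w* a w) ≤ λ • b`. -/
theorem transitive_of_gammaSimple {Γ A : Type*} [Group Γ] [CStarAlgebra A]
    [PartialOrder A] [StarOrderedRing A]
    (α : Γ → A ≃⋆ₐ[ℂ] A) (hα : ∀ (s t : Γ) (x : A), α (s * t) x = α s (α t x))
    (hsimple : ¬ ∃ I : TwoSidedIdeal A, IsClosed (I : Set A) ∧ I ≠ ⊥ ∧ I ≠ ⊤ ∧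
        ∀ s : Γ, (α s) '' (I : Set A) = I) :
    ∀ a b : A, 0 ≤ a → a ≠ 0 → 0 ≤ b → b ≠ 0 →
      ∃ (t : Γ) (w : A) (l : ℝ), 0 < l ∧ star w * a * w ≠ 0 ∧
        α t (star w * a * w) ≤ l • b := by
  intro a b ha ha0 hb hb0
  set c := CFC.sqrt b
  have hc : c ≠ 0 := by rwa [Ne, CFC.sqrt_eq_zero_iff b]
  obtain ⟨t, y, hty⟩ := exists_apply_mul_mul_ne_zero hα
    (fun s => (StarAlgEquiv.isometry (α s)).continuous) hsimple ha0 hc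
  set d := star y * α t a * y
  have hmap : α t (star (α t⁻¹ (y * c)) * a * α t⁻¹ (y * c)) = star c * d * c := by
    simp only [map_mul, map_star, apply_apply_inv_of_map_mul hα, star_mul, d, mul_assoc]
  have hne : star c * d * c ≠ 0 := by
    have hconj := star_mul_mul_ne_zero_of_mul_ne_zero (map_nonneg (α t) ha)
      (x := y * c) (by rwa [← mul_assoc])
    simpa only [star_mul, d, mul_assoc] using hconj
  have hd : d ≠ 0 := by rintro hd; simp [hd] at hne
  refine ⟨t, α t⁻¹ (y * c), ‖d‖, norm_pos_iff.2 hd, fun h => hne ?_, ?_⟩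
  · rw [← hmap, h, map_zero]
  · have hcc : star c * c = b := by
      rw [(CFC.sqrt_nonneg b).star_eq, CFC.sqrt_mul_sqrt_self b hb]
    calc _ = star c * d * c := hmap
      _ ≤ ‖d‖ • (star c * c) := CStarAlgebra.star_left_conjugate_le_norm_smul
      _ = ‖d‖ • b := by rw [hcc]
end

section
/- Let X be a topological space and let E₁,…,E_n and F₁,…,F_m be clopen subsets of X such that Σ_{j=1}^n 1_{E_j} = Σ_{i=1}^m 1_{F_i} as integer-valued functions on X. Then there exist r ∈ ℕ, clopen sets C₁,…,C_r ⊆ X and indices n₁,…,n_r ∈ {1,…,n} and m₁,…,m_r ∈ {1,…,m} such that the sets C_k × {n_k} (k = 1,…,r) are pairwise disjoint with union ⋃_{j=1}^n E_j × {j} ⊆ X × ℕ, and the sets C_k × {m_k} (k = 1,…,r) are pairwise disjoint with union ⋃_{i=1}^m F_i × {i} ⊆ X × ℕ. -/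
/-!
At a point `x` let `S x` and `T x` be the sets of indices `j` with `x ∈ E j` and `i` with
`x ∈ F i`; the hypothesis says exactly that `#S x = #T x`. Fix once and for all a bijection
`S ≃ T` for every pair of finsets `S`, `T` of equal size, and let the tile `C (j, i)` be the set of
points `x` at which the bijection `S x ≃ T x` sends `j` to `i`. Since `x ↦ (S x, T x)` is locally
constant, every tile is clopen, and every `(x, j)` with `x ∈ E j`, resp. `(x, i)` with `x ∈ F i`,
lies in exactly one tile labelled `j`, resp. `i`.
-/

open Set Filter Topology
open scoped Finset

namespace Finset

variable {α β : Type*} {s : Finset α} {t : Finset β} {a : α} {b : β}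

def Matched (s : Finset α) (t : Finset β) (a : α) (b : β) : Prop :=
  ∃ (h : #s = #t) (ha : a ∈ s), (equivOfCardEq h ⟨a, ha⟩ : β) = b

theorem Matched.mem_left (h : Matched s t a b) : a ∈ s :=
  h.elim fun _ ⟨ha, _⟩ => ha

theorem Matched.mem_right (h : Matched s t a b) : b ∈ t := by
  obtain ⟨_, _, rfl⟩ := h
  exact Subtype.prop _

theorem existsUnique_matched_of_mem_left (hst : #s = #t) (ha : a ∈ s) :
    ∃! b, Matched s t a b :=
  ⟨_, ⟨hst, ha, rfl⟩, by rintro b ⟨_, _, rfl⟩; rfl⟩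

theorem existsUnique_matched_of_mem_right (hst : #s = #t) (hb : b ∈ t) :
    ∃! a, Matched s t a b :=
  ⟨_, ⟨hst, (equivOfCardEq hst).symm ⟨b, hb⟩ |>.2, by simp⟩, by rintro a ⟨_, ha, rfl⟩; simp⟩

end Finset

section

variable {X : Type*} [TopologicalSpace X]

theorem IsLocallyConstant.isClopen_preimage {Y : Type*} {f : X → Y} (hf : IsLocallyConstant f)
    (s : Set Y) : IsClopen (f ⁻¹' s) :=
  ⟨isOpen_compl_iff.1 (hf sᶜ), hf s⟩

theorem IsClopen.eventually_mem_iff {s : Set X} (hs : IsClopen s) (x : X) :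
    ∀ᶠ y in 𝓝 x, (y ∈ s ↔ x ∈ s) := by
  by_cases hx : x ∈ s
  · filter_upwards [hs.isOpen.mem_nhds hx] with y hy using iff_of_true hy hx
  · filter_upwards [hs.compl.isOpen.mem_nhds hx] with y hy using iff_of_false hy hx

open Classical in
theorem isLocallyConstant_filter_mem {κ : Type*} [Fintype κ] {E : κ → Set X}
    (hE : ∀ j, IsClopen (E j)) : IsLocallyConstant fun x => ({j | x ∈ E j} : Finset κ) :=
  (IsLocallyConstant.iff_eventually_eq _).2 fun x =>
    (eventually_all.2 fun j => (hE j).eventually_mem_iff x).mono fun _ hy =>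
      Finset.filter_congr fun j _ => hy j

end

theorem sum_indicator_one_eq_card {X κ : Type*} [Fintype κ] (E : κ → Set X) (x : X)
    [DecidablePred (x ∈ E ·)] :
    ∑ j, (E j).indicator (fun _ => (1 : ℤ)) x = #{j | x ∈ E j} := by
  simp [Set.indicator_apply]

theorem disjoint_prod_singleton_of_ne {X ι κ β : Type*} {C : ι → Set X} {π : ι → κ}
    {E : κ → Set X} {g : κ → β} (hg : g.Injective) (hsub : ∀ k, C k ⊆ E (π k))
    (hunique : ∀ j, ∀ x ∈ E j, ∃! k, π k = j ∧ x ∈ C k) (k k' : ι) (hkk' : k ≠ k') :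
    Disjoint (C k ×ˢ ({g (π k)} : Set β)) (C k' ×ˢ {g (π k')}) := by
  rw [Set.disjoint_prod]
  by_cases hπ : π k = π k'
  · exact .inl <| Set.disjoint_left.2 fun x hx hx' =>
      hkk' <| (hunique _ x (hsub k hx)).unique ⟨rfl, hx⟩ ⟨hπ.symm, hx'⟩
  · exact .inr <| Set.disjoint_singleton.2 (hg.ne hπ)

theorem iUnion_prod_singleton_eq {X ι κ β : Type*} {C : ι → Set X} {π : ι → κ}
    {E : κ → Set X} {g : κ → β} (hsub : ∀ k, C k ⊆ E (π k))
    (hcover : ∀ j, ∀ x ∈ E j, ∃ k, π k = j ∧ x ∈ C k) :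
    ⋃ k, C k ×ˢ ({g (π k)} : Set β) = ⋃ j, E j ×ˢ {g j} := by
  ext ⟨x, b⟩
  simp only [mem_iUnion, mem_prod, mem_singleton_iff]
  constructor
  · rintro ⟨k, hx, rfl⟩
    exact ⟨π k, hsub k hx, rfl⟩
  · rintro ⟨j, hx, rfl⟩
    obtain ⟨k, rfl, hk⟩ := hcover j x hx
    exact ⟨k, hk, rfl⟩

open Classical in
theorem exists_clopen_tiles {X ι κ : Type*} [TopologicalSpace X] [Fintype ι] [Fintype κ]
    {E : ι → Set X} {F : κ → Set X} (hE : ∀ j, IsClopen (E j)) (hF : ∀ i, IsClopen (F i))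
    (hcard : ∀ x, #{j | x ∈ E j} = #{i | x ∈ F i}) :
    ∃ C : ι × κ → Set X, (∀ p, IsClopen (C p)) ∧ (∀ p, C p ⊆ E p.1 ∩ F p.2) ∧
      (∀ j, ∀ x ∈ E j, ∃! p, p.1 = j ∧ x ∈ C p) ∧ (∀ i, ∀ x ∈ F i, ∃! p, p.2 = i ∧ x ∈ C p) := by
  set pattern := fun x => (({j | x ∈ E j} : Finset ι), ({i | x ∈ F i} : Finset κ))
  have hpattern : IsLocallyConstant pattern :=
    (isLocallyConstant_filter_mem hE).prodMk (isLocallyConstant_filter_mem hF)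
  refine ⟨fun p => pattern ⁻¹' {S | S.1.Matched S.2 p.1 p.2},
    fun p => hpattern.isClopen_preimage _, fun p x hx => ?_, fun j x hx => ?_, fun i x hx => ?_⟩
  · simpa [pattern] using And.intro hx.mem_left hx.mem_right
  · obtain ⟨i, hi, huniq⟩ := Finset.existsUnique_matched_of_mem_left (hcard x) (by simpa using hx)
    exact ⟨(j, i), ⟨rfl, hi⟩, fun ⟨j', i'⟩ ⟨hj', hi'⟩ => by cases hj'; rw [huniq i' hi']⟩
  · obtain ⟨j, hj, huniq⟩ := Finset.existsUnique_matched_of_mem_right (hcard x) (by simpa using hx)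
    exact ⟨(j, i), ⟨rfl, hj⟩, fun ⟨j', i'⟩ ⟨hi', hj'⟩ => by cases hi'; rw [huniq j' hj']⟩

/-- If `E₁,…,E_n` and `F₁,…,F_m` are clopen subsets of a topological space
`X` with `∑ 1_{Eⱼ} = ∑ 1_{F_i}` as integer-valued functions, then there is a common clopen
refinement: clopen sets `C₁,…,C_r` with indices `n_k ∈ {1,…,n}`, `m_k ∈ {1,…,m}` such that
the `C_k × {n_k}` are pairwise disjoint with union `⋃ⱼ Eⱼ × {j}`, and the `C_k × {m_k}`
are pairwise disjoint with union `⋃ᵢ F_i × {i}`. -/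
theorem clopen_refinement {X : Type*} [TopologicalSpace X] (n m : ℕ)
    (E : Fin n → Set X) (F : Fin m → Set X)
    (hE : ∀ j, IsClopen (E j)) (hF : ∀ i, IsClopen (F i))
    (hsum : ∀ x : X, ∑ j, (E j).indicator (fun _ => (1 : ℤ)) x =
      ∑ i, (F i).indicator (fun _ => (1 : ℤ)) x) :
    ∃ (r : ℕ) (C : Fin r → Set X) (nk : Fin r → Fin n) (mk : Fin r → Fin m),
      (∀ k, IsClopen (C k)) ∧
      (∀ k k' : Fin r, k ≠ k' →
        Disjoint (C k ×ˢ ({(nk k : ℕ)} : Set ℕ)) (C k' ×ˢ ({(nk k' : ℕ)} : Set ℕ))) ∧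
      (⋃ k, C k ×ˢ ({(nk k : ℕ)} : Set ℕ)) = (⋃ j, E j ×ˢ ({(j : ℕ)} : Set ℕ)) ∧
      (∀ k k' : Fin r, k ≠ k' →
        Disjoint (C k ×ˢ ({(mk k : ℕ)} : Set ℕ)) (C k' ×ˢ ({(mk k' : ℕ)} : Set ℕ))) ∧
      (⋃ k, C k ×ˢ ({(mk k : ℕ)} : Set ℕ)) = (⋃ i, F i ×ˢ ({(i : ℕ)} : Set ℕ)) := by
  classical
  have hcard : ∀ x, #{j | x ∈ E j} = #{i | x ∈ F i} := fun x => by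
    have := hsum x
    rwa [sum_indicator_one_eq_card, sum_indicator_one_eq_card, Nat.cast_inj] at this
  obtain ⟨C, hC, hsub, huE, huF⟩ := exists_clopen_tiles hE hF hcard
  let e : Fin (n * m) ≃ Fin n × Fin m := finProdFinEquiv.symm
  have hsubE : ∀ k, C (e k) ⊆ E (e k).1 := fun k => (hsub _).trans inter_subset_left
  have hsubF : ∀ k, C (e k) ⊆ F (e k).2 := fun k => (hsub _).trans inter_subset_right
  have huE' : ∀ j, ∀ x ∈ E j, ∃! k, (e k).1 = j ∧ x ∈ C (e k) :=
    fun j x hx => e.existsUnique_congr_right.2 (huE j x hx)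
  have huF' : ∀ i, ∀ x ∈ F i, ∃! k, (e k).2 = i ∧ x ∈ C (e k) :=
    fun i x hx => e.existsUnique_congr_right.2 (huF i x hx)
  exact ⟨n * m, C ∘ e, fun k => (e k).1, fun k => (e k).2, fun k => hC _,
    disjoint_prod_singleton_of_ne Fin.val_injective hsubE huE',
    iUnion_prod_singleton_eq hsubE fun j x hx => (huE' j x hx).exists,
    disjoint_prod_singleton_of_ne Fin.val_injective hsubF huF',
    iUnion_prod_singleton_eq hsubF fun i x hx => (huF' i x hx).exists⟩
end
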